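/- arXiv:1601.04566 — 8 statements merged into one kernel-verified Lean document; each statement's English description precedes it below -/
import Mathlib

section
/- Let q > 1 be an odd integer. Then either the closure of ⟨q⟩ in ℤ₂ˣ equals the closure of ⟨3⟩, or it equals the closure of ⟨5⟩, or there exist ε ∈ {±1} and k ≥ 1 with ε ≡ q (mod 8) and closure of ⟨q⟩ equal to the closure of ⟨ε·3^(2^k)⟩. -/
lemma lte_aux (x : ℤ) (c : ℕ) (hc : 2 ≤ c) (h : ∃ u, Odd u ∧ x ^ 2 = 1 + 2 ^ c * u) :
    ∀ j : ℕ, ∃ u, Odd u ∧ x ^ 2 ^ (j + 1) = 1 + 2 ^ (c + j) * u := by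
  obtain ⟨c', rfl⟩ : ∃ c', c = c' + 2 := ⟨c - 2, by omega⟩
  intro j
  induction j with
  | zero => simpa using h
  | succ j ih =>
      obtain ⟨u, hu, hx⟩ := ih
      refine ⟨u + 2 ^ (c' + 1 + j) * u ^ 2, by simp [Int.odd_add, hu, parity_simps], ?_⟩
      have h1 : x ^ 2 ^ (j + 1 + 1) = (x ^ 2 ^ (j + 1)) ^ 2 := by
        rw [← pow_mul, pow_succ]
      have h2 : (1 + 2 ^ (c' + 2 + j) * u) ^ 2
          = 1 + 2 ^ (c' + 2 + (j + 1)) * (u + 2 ^ (c' + 1 + j) * u ^ 2) := by ring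
      rw [h1, hx, h2]

lemma odd_of_sq (x : ℤ) (c : ℕ) (hc : 2 ≤ c) (h : ∃ u, Odd u ∧ x ^ 2 = 1 + 2 ^ c * u) :
    Odd x := by
  obtain ⟨u, hu, hx⟩ := h
  have h1 : Odd (x ^ 2) := by
    rw [hx]
    exact ((Int.even_pow.mpr ⟨even_two, by omega⟩).mul_right u).one_add
  exact (Int.odd_pow' (by norm_num)).mp h1

lemma key (x y : ℤ) (c : ℕ) (hc : 2 ≤ c) (hx : ∃ u, Odd u ∧ x ^ 2 = 1 + 2 ^ c * u)
    (hxy : (2 ^ c : ℤ) ∣ x - y) : ∀ n : ℕ, ∃ m : ℕ, (2 ^ n : ℤ) ∣ x ^ m - y := by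
  have hxodd : Odd x := odd_of_sq x c hc hx
  intro n
  induction n with
  | zero => exact ⟨1, by norm_num⟩
  | succ n ih =>
      by_cases hn : n + 1 ≤ c
      · exact ⟨1, by simpa using dvd_trans (pow_dvd_pow (2:ℤ) hn) hxy⟩
      · push_neg at hn
        obtain ⟨m, r, hr⟩ := ih
        rcases Int.even_or_odd r with hre | hro
        · obtain ⟨s, rfl⟩ := hre
          exact ⟨m, ⟨s, by rw [hr]; ring⟩⟩
        · obtain ⟨j, hj⟩ : ∃ j : ℕ, n = c + j := ⟨n - c, by omega⟩
          obtain ⟨u, hu, hxu⟩ := lte_aux x c hc hx j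
          refine ⟨m + 2 ^ (j + 1), ?_⟩
          have hsplit : x ^ (m + 2 ^ (j + 1)) - y
              = x ^ m * (x ^ 2 ^ (j + 1) - 1) + (x ^ m - y) := by
            rw [pow_add]; ring
          rw [hsplit, hxu, hr, hj]
          obtain ⟨w, hw⟩ := (hxodd.pow.mul hu).add_odd hro
          exact ⟨w, by linear_combination (2:ℤ) ^ (c + j) * hw⟩

lemma exists_odd_part_aux : ∀ N : ℕ, ∀ d : ℤ, d ≠ 0 → d.natAbs ≤ N →
    ∃ m : ℕ, ∃ a : ℤ, Odd a ∧ d = 2 ^ m * a := by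
  intro N
  induction N with
  | zero => intro d hd h; exact absurd (by omega : d = 0) hd
  | succ N ih =>
      intro d hd h
      rcases Int.even_or_odd d with ⟨e, rfl⟩ | hodd
      · have he : e ≠ 0 := by omega
        obtain ⟨m, a, ha, he2⟩ := ih e he (by omega)
        exact ⟨m + 1, a, ha, by rw [he2]; ring⟩
      · exact ⟨0, d, hodd, by ring⟩

lemma exists_odd_part (d : ℤ) (hd : d ≠ 0) : ∃ m : ℕ, ∃ a : ℤ, Odd a ∧ d = 2 ^ m * a :=
  exists_odd_part_aux d.natAbs d hd le_rfl

open Filter in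
lemma mem_closure_zpowers (a b : ℤ_[2]ˣ) (x y : ℤ)
    (ha : (a : ℤ_[2]) = (x : ℤ_[2])) (hb : (b : ℤ_[2]) = (y : ℤ_[2]))
    (h : ∀ n : ℕ, ∃ m : ℕ, (2 ^ n : ℤ) ∣ x ^ m - y) :
    b ∈ (Subgroup.zpowers a).topologicalClosure := by
  choose m hm using h
  have htend : Tendsto (fun n => a ^ m n) atTop (nhds b) := by
    rw [Units.isOpenEmbedding_val.toIsEmbedding.tendsto_nhds_iff]
    rw [tendsto_iff_norm_sub_tendsto_zero]
    apply squeeze_zero (fun n => norm_nonneg _) (g := fun n : ℕ => (2 : ℝ)⁻¹ ^ n)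
    · intro n
      have : ((a ^ m n : ℤ_[2]ˣ) : ℤ_[2]) - (b : ℤ_[2]) = ((x ^ m n - y : ℤ) : ℤ_[2]) := by
        push_cast [ha, hb]
        ring
      show ‖((a ^ m n : ℤ_[2]ˣ) : ℤ_[2]) - (b : ℤ_[2])‖ ≤ (2:ℝ)⁻¹ ^ n
      rw [this]
      have := PadicInt.norm_int_le_pow_iff_dvd (p := 2) (k := x ^ m n - y) (n := n) |>.mpr (hm n)
      calc ‖((x ^ m n - y : ℤ) : ℤ_[2])‖ ≤ ((2 : ℕ) : ℝ) ^ (-(n : ℤ)) := this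
        _ = (2 : ℝ)⁻¹ ^ n := by
            rw [inv_pow, zpow_neg, zpow_natCast]
            norm_num
    · exact tendsto_pow_atTop_nhds_zero_of_lt_one (by norm_num) (by norm_num)
  have : b ∈ closure ((Subgroup.zpowers a : Subgroup ℤ_[2]ˣ) : Set ℤ_[2]ˣ) :=
    mem_closure_of_tendsto htend (Eventually.of_forall fun n => ⟨(m n : ℤ), zpow_natCast a (m n)⟩)
  exact this

lemma closure_zpowers_eq (a b : ℤ_[2]ˣ)
    (h1 : b ∈ (Subgroup.zpowers a).topologicalClosure)
    (h2 : a ∈ (Subgroup.zpowers b).topologicalClosure) :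
    (Subgroup.zpowers a).topologicalClosure = (Subgroup.zpowers b).topologicalClosure := by
  apply le_antisymm
  · exact Subgroup.topologicalClosure_minimal _ ((Subgroup.zpowers_le).mpr h2)
      (Subgroup.isClosed_topologicalClosure _)
  · exact Subgroup.topologicalClosure_minimal _ ((Subgroup.zpowers_le).mpr h1)
      (Subgroup.isClosed_topologicalClosure _)

lemma caseC (q ε : ℤ) (hε : ε = 1 ∨ ε = -1) (hne : q ≠ ε) (h8 : (8 : ℤ) ∣ q - ε)
    (uq : ℤ_[2]ˣ) (huq : (uq : ℤ_[2]) = (q : ℤ_[2])) :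
    ∃ (ε' : ℤ) (k : ℕ), (ε' = 1 ∨ ε' = -1) ∧ 1 ≤ k ∧ (8 : ℤ) ∣ (q - ε') ∧
      ∀ u : ℤ_[2]ˣ, (u : ℤ_[2]) = (ε' : ℤ_[2]) * 3 ^ (2 ^ k) →
        (Subgroup.zpowers uq).topologicalClosure = (Subgroup.zpowers u).topologicalClosure := by
  obtain ⟨m, a, ha, hma⟩ := exists_odd_part (q - ε) (sub_ne_zero.mpr hne)
  have hεodd : Odd ε := by rcases hε with rfl | rfl <;> decide
  have hε2 : ε ^ 2 = 1 := by rcases hε with rfl | rfl <;> norm_num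
  have hm3 : 3 ≤ m := by
    by_contra hm
    push_neg at hm
    obtain ⟨b, hb⟩ := ha
    obtain ⟨c8, hc8⟩ := h8
    interval_cases m <;> omega
  obtain ⟨k', rfl⟩ : ∃ k', m = k' + 3 := ⟨m - 3, by omega⟩
  have hq2 : q = ε + 2 ^ (k' + 3) * a := by linarith
  have hqsq : ∃ u, Odd u ∧ q ^ 2 = 1 + 2 ^ (k' + 4) * u :=
    ⟨a * ε + 2 ^ (k' + 2) * a ^ 2,
      (ha.mul hεodd).add_even ⟨2 ^ (k' + 1) * a ^ 2, by ring⟩,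
      by linear_combination (q + ε + 2 ^ (k' + 3) * a) * hq2 + hε2⟩
  obtain ⟨u0, hu0, hu0'⟩ := lte_aux 3 3 (by norm_num) ⟨1, odd_one, by norm_num⟩ (k' + 1)
  obtain ⟨v, hv, hv'⟩ := lte_aux 3 3 (by norm_num) ⟨1, odd_one, by norm_num⟩ k'
  set w : ℤ := ε * 3 ^ (2 ^ (k' + 1)) with hw
  have hw2 : w ^ 2 = 3 ^ 2 ^ (k' + 2) := by
    rw [hw, mul_pow, hε2, one_mul, ← pow_mul, ← pow_succ]
  have hwsq : ∃ u, Odd u ∧ w ^ 2 = 1 + 2 ^ (k' + 4) * u :=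
    ⟨u0, hu0, by rw [hw2, hu0']; ring_nf⟩
  obtain ⟨s, hs⟩ := ha.sub_odd (hεodd.mul hv)
  have hdiff : (2 ^ (k' + 4) : ℤ) ∣ q - w :=
    ⟨s, by rw [hw]; linear_combination hq2 - ε * hv' + 2 ^ (k' + 3) * hs⟩
  refine ⟨ε, k' + 1, hε, by omega, h8, ?_⟩
  intro u hu
  have hu' : (u : ℤ_[2]) = ((w : ℤ) : ℤ_[2]) := by rw [hw]; push_cast; exact hu
  exact closure_zpowers_eq uq u
    (mem_closure_zpowers uq u q w huq hu' (key q w (k' + 4) (by norm_num) hqsq hdiff))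
    (mem_closure_zpowers u uq w q hu' huq
      (key w q (k' + 4) (by norm_num) hwsq (dvd_sub_comm.mp hdiff)))

/-- Let `q > 1` be an odd integer.  Then the closure of `⟨q⟩` in `ℤ₂ˣ` equals the closure of
`⟨3⟩`, or the closure of `⟨5⟩`, or there are `ε = ±1` and `k ≥ 1` with `ε ≡ q (mod 8)` and
closure `⟨q⟩` = closure `⟨ε·3^(2^k)⟩`. -/
theorem stmt_2 (q : ℤ) (hq : 1 < q) (hodd : Odd q)
    (uq u3 u5 : ℤ_[2]ˣ)
    (huq : (uq : ℤ_[2]) = (q : ℤ_[2])) (hu3 : (u3 : ℤ_[2]) = 3) (hu5 : (u5 : ℤ_[2]) = 5) :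
    (Subgroup.zpowers uq).topologicalClosure = (Subgroup.zpowers u3).topologicalClosure ∨
    (Subgroup.zpowers uq).topologicalClosure = (Subgroup.zpowers u5).topologicalClosure ∨
    ∃ (ε : ℤ) (k : ℕ), (ε = 1 ∨ ε = -1) ∧ 1 ≤ k ∧ (8 : ℤ) ∣ (q - ε) ∧
      ∀ u : ℤ_[2]ˣ, (u : ℤ_[2]) = (ε : ℤ_[2]) * 3 ^ (2 ^ k) →
        (Subgroup.zpowers uq).topologicalClosure = (Subgroup.zpowers u).topologicalClosure := by
  have hu3' : (u3 : ℤ_[2]) = ((3 : ℤ) : ℤ_[2]) := by exact_mod_cast hu3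
  have hu5' : (u5 : ℤ_[2]) = ((5 : ℤ) : ℤ_[2]) := by exact_mod_cast hu5
  have h3sq : ∃ u, Odd u ∧ (3 : ℤ) ^ 2 = 1 + 2 ^ 3 * u := ⟨1, odd_one, by norm_num⟩
  have h5sq : ∃ u, Odd u ∧ (5 : ℤ) ^ 2 = 1 + 2 ^ 3 * u := ⟨3, ⟨1, by norm_num⟩, by norm_num⟩
  have h8 : q % 8 = 1 ∨ q % 8 = 3 ∨ q % 8 = 5 ∨ q % 8 = 7 := by
    obtain ⟨t, rfl⟩ := hodd; omega
  rcases h8 with h | h | h | h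
  · exact Or.inr (Or.inr (caseC q 1 (Or.inl rfl) (by omega) (by omega) uq huq))
  · left
    have hd : (2 ^ 3 : ℤ) ∣ q - 3 := by norm_num; omega
    obtain ⟨t', ht'⟩ := hd
    have hqsq : ∃ u, Odd u ∧ q ^ 2 = 1 + 2 ^ 3 * u :=
      ⟨1 + 6 * t' + 8 * t' ^ 2, ⟨3 * t' + 4 * t' ^ 2, by ring⟩,
        by linear_combination (q + 3 + 8 * t') * ht'⟩
    have hd' : (2 ^ 3 : ℤ) ∣ q - 3 := ⟨t', ht'⟩
    exact closure_zpowers_eq uq u3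
      (mem_closure_zpowers uq u3 q 3 huq hu3' (key q 3 3 (by norm_num) hqsq hd'))
      (mem_closure_zpowers u3 uq 3 q hu3' huq (key 3 q 3 (by norm_num) h3sq (dvd_sub_comm.mp hd')))
  · right; left
    have hd : (2 ^ 3 : ℤ) ∣ q - 5 := by norm_num; omega
    obtain ⟨t', ht'⟩ := hd
    have hqsq : ∃ u, Odd u ∧ q ^ 2 = 1 + 2 ^ 3 * u :=
      ⟨3 + 10 * t' + 8 * t' ^ 2, ⟨1 + 5 * t' + 4 * t' ^ 2, by ring⟩,
        by linear_combination (q + 5 + 8 * t') * ht'⟩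
    have hd' : (2 ^ 3 : ℤ) ∣ q - 5 := ⟨t', ht'⟩
    exact closure_zpowers_eq uq u5
      (mem_closure_zpowers uq u5 q 5 huq hu5' (key q 5 3 (by norm_num) hqsq hd'))
      (mem_closure_zpowers u5 uq 5 q hu5' huq (key 5 q 3 (by norm_num) h5sq (dvd_sub_comm.mp hd')))
  · exact Or.inr (Or.inr (caseC q (-1) (Or.inr rfl) (by omega) (by omega) uq huq))
end

section
/- Let p be a prime and G a finite group with a strongly p-embedded subgroup H < G. Let K be a normal subgroup of G of order prime to p such that KH is a proper subgroup of G. Then HK/K is strongly p-embedded in G/K. -/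
/-- `K` is a strongly `p`-embedded subgroup of `H` (inside an ambient group `G`):
`K < H`, `p` divides `|K|`, and `p` does not divide `|K ∩ gKg⁻¹|` for all `g ∈ H \ K`. -/
def IsStronglyPEmbeddedIn (p : ℕ) {G : Type*} [Group G] (K H : Subgroup G) : Prop :=
  K < H ∧ p ∣ Nat.card K ∧
    ∀ g ∈ H, g ∉ K →
      ¬ p ∣ Nat.card ↥(K ⊓ Subgroup.map (MulAut.conj g).toMonoidHom K)

/-!
Write `f : G → G ⧸ K`. If `p` divides `|f(H) ∩ f(H)^{f(g)}|`, then `(H ⊔ K) ⊓ (H^g ⊔ K)` contains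
a subgroup `X` of order `p`. Since `|HK : H| = |K : H ∩ K|` is prime to `p`, a Sylow `p`-subgroup
of `H` is a Sylow `p`-subgroup of `HK`, so every `p`-subgroup of `HK` has a `K`-conjugate inside
`H`. Doing this for `H` and for `H^g` moves a conjugate of `X` into `H ∩ H^{kg}` for some `k ∈ K`,
and `kg ∉ H` because `f(kg) = f(g) ∉ f(H)`, contradicting the strong embedding of `H`.
-/

open Subgroup Pointwise

section

variable {G : Type*} [Group G]

theorem relIndex_sup_eq_inf_relIndex [Finite G] (H K : Subgroup G) [K.Normal] :
    H.relIndex (H ⊔ K) = (H ⊓ K).relIndex K := by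
  have h₁ := relIndex_inf_mul_relIndex K H (H ⊔ K)
  have h₂ := relIndex_mul_relIndex (K ⊓ H) K (H ⊔ K) inf_le_left le_sup_right
  rw [inf_sup_self, ← h₂, relIndex_sup_right, mul_comm, inf_comm] at h₁
  exact Nat.eq_of_mul_eq_mul_right (Nat.pos_of_ne_zero index_ne_zero_of_finite) h₁

theorem exists_sylow_le_of_not_dvd_index [Finite G] {p : ℕ} [hp : Fact p.Prime] {H : Subgroup G}
    (hH : ¬ p ∣ H.index) : ∃ P : Sylow p G, (P : Subgroup G) ≤ H := by
  obtain ⟨Q⟩ : Nonempty (Sylow p H) := inferInstance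
  have hQ : IsPGroup p (Q.map H.subtype) := Q.isPGroup'.map _
  refine ⟨hQ.toSylow ?_, map_subtype_le _⟩
  rw [index_map_subtype]
  exact hp.out.not_dvd_mul Q.not_dvd_index hH

theorem IsPGroup.exists_conj_le_of_le_sup [Finite G] {p : ℕ} [Fact p.Prime]
    {H K X : Subgroup G} [K.Normal] (hK : ¬ p ∣ Nat.card K) (hX : IsPGroup p X)
    (hXHK : X ≤ H ⊔ K) : ∃ k ∈ K, X.map (MulAut.conj k).toMonoidHom ≤ H := by
  set S := H ⊔ K
  have hindex : ¬ p ∣ (H.subgroupOf S).index := fun h => hK <| h.trans <| by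
    rw [← relIndex, relIndex_sup_eq_inf_relIndex]; exact relIndex_dvd_card (H ⊓ K) K
  obtain ⟨P, hPH⟩ := exists_sylow_le_of_not_dvd_index hindex
  obtain ⟨R, hXR⟩ := (hX.comap_subtype (K := S)).exists_le_sylow
  obtain ⟨s, rfl⟩ := MulAction.exists_smul_eq S P R
  obtain ⟨k, hk, h, hh, hkh⟩ : (s : G) ∈ (K : Set G) * H := by
    rw [← normal_mul, sup_comm]; exact s.2
  refine ⟨k⁻¹, inv_mem hk, ?_⟩
  rintro _ ⟨x, hx, rfl⟩
  have hxs : ((s⁻¹ * ⟨x, hXHK hx⟩ * s : S) : G) ∈ H := by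
    have := hXR (x := ⟨x, hXHK hx⟩) hx
    rw [Sylow.coe_subgroup_smul, mem_pointwise_smul_iff_inv_smul_mem] at this
    exact hPH (by simpa using this)
  have hconj : MulAut.conj k⁻¹ x = h * ((s⁻¹ * ⟨x, hXHK hx⟩ * s : S) : G) * h⁻¹ := by
    simp only [MulAut.conj_apply, coe_mul, coe_inv, ← hkh]; group
  rw [MulEquiv.coe_toMonoidHom, hconj]
  exact mul_mem (mul_mem hh hxs) (inv_mem hh)

theorem map_conj_map_conj (a b : G) (H : Subgroup G) :
    (H.map (MulAut.conj b).toMonoidHom).map (MulAut.conj a).toMonoidHom =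
      H.map (MulAut.conj (a * b)).toMonoidHom := by
  rw [map_map]; congr 1; ext; simp [mul_assoc]

theorem IsPGroup.exists_conj_le_inf_conj [Finite G] {p : ℕ} [Fact p.Prime]
    {H K X : Subgroup G} [K.Normal] (hK : ¬ p ∣ Nat.card K) (hX : IsPGroup p X) {g : G}
    (hXHK : X ≤ (H ⊔ K) ⊓ (H.map (MulAut.conj g).toMonoidHom ⊔ K)) :
    ∃ k ∈ K, ∃ k' ∈ K,
      X.map (MulAut.conj k').toMonoidHom ≤ H ⊓ H.map (MulAut.conj (k * g)).toMonoidHom := by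
  obtain ⟨k₁, hk₁, h₁⟩ := hX.exists_conj_le_of_le_sup hK (hXHK.trans inf_le_left)
  obtain ⟨k₂, hk₂, h₂⟩ := hX.exists_conj_le_of_le_sup hK (hXHK.trans inf_le_right)
  refine ⟨k₁ * k₂⁻¹, mul_mem hk₁ (inv_mem hk₂), k₁, hk₁, le_inf h₁ ?_⟩
  calc X.map (MulAut.conj k₁).toMonoidHom
      = (X.map (MulAut.conj k₂).toMonoidHom).map (MulAut.conj (k₁ * k₂⁻¹)).toMonoidHom := by
        rw [map_conj_map_conj, inv_mul_cancel_right]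
    _ ≤ (H.map (MulAut.conj g).toMonoidHom).map (MulAut.conj (k₁ * k₂⁻¹)).toMonoidHom :=
        map_mono h₂
    _ = H.map (MulAut.conj (k₁ * k₂⁻¹ * g)).toMonoidHom := map_conj_map_conj _ _ _

theorem map_inf_map_of_surjective {N : Type*} [Group N] {f : G →* N}
    (hf : Function.Surjective f) (A B : Subgroup G) :
    A.map f ⊓ B.map f = ((A ⊔ f.ker) ⊓ (B ⊔ f.ker)).map f := by
  rw [← comap_map_eq, ← comap_map_eq, ← comap_inf, map_comap_eq_self_of_surjective hf]

theorem map_conj_map_eq_map_map_conj {N : Type*} [Group N] (f : G →* N) (g : G)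
    (H : Subgroup G) :
    (H.map f).map (MulAut.conj (f g)).toMonoidHom = (H.map (MulAut.conj g).toMonoidHom).map f := by
  rw [map_map, map_map]; congr 1; ext; simp

theorem dvd_card_map_mk' {p : ℕ} (hp : p.Prime) {H K : Subgroup G} [K.Normal]
    (hpH : p ∣ Nat.card H) (hK : ¬ p ∣ Nat.card K) :
    p ∣ Nat.card (H.map (QuotientGroup.mk' K)) := by
  have hmap : Nat.card (H.map (QuotientGroup.mk' K)) = K.relIndex H := by
    rw [← relIndex_ker, QuotientGroup.ker_mk']
  rw [← card_mul_index (K.subgroupOf H)] at hpH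
  rw [hmap]
  refine (hp.dvd_mul.mp hpH).resolve_left fun h => hK (h.trans ?_)
  exact card_comap_dvd_of_injective K H.subtype H.subtype_injective

end

/-- If `H` is strongly `p`-embedded in a finite group `G`, and `K ⊴ G` is a normal subgroup of
order prime to `p` with `KH < G`, then `HK/K` is strongly `p`-embedded in `G/K`. -/
theorem stmt_4 (p : ℕ) (hp : p.Prime) (G : Type*) [Group G] [Finite G]
    (H : Subgroup G) (hH : IsStronglyPEmbeddedIn p H ⊤)
    (K : Subgroup G) [K.Normal] (hK : ¬ p ∣ Nat.card K) (hKH : K ⊔ H < ⊤) :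
    IsStronglyPEmbeddedIn p (H.map (QuotientGroup.mk' K)) ⊤ := by
  have : Fact p.Prime := ⟨hp⟩
  obtain ⟨-, hpH, hH⟩ := hH
  have hf := QuotientGroup.mk'_surjective K
  refine ⟨lt_top_iff_ne_top.mpr fun htop => hKH.ne ?_, dvd_card_map_mk' hp hpH hK, ?_⟩
  · simpa [sup_comm, QuotientGroup.ker_mk'] using congrArg (comap (QuotientGroup.mk' K)) htop
  rintro gq - hgH hdvd
  obtain ⟨g, rfl⟩ := hf gq
  rw [map_conj_map_eq_map_map_conj, map_inf_map_of_surjective hf, QuotientGroup.ker_mk'] at hdvd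
  obtain ⟨⟨x, hxM⟩, hx⟩ := exists_prime_orderOf_dvd_card' p (hdvd.trans (card_map_dvd _ _))
  rw [orderOf_mk] at hx
  have hX : IsPGroup p (zpowers x) := .of_card (n := 1) (by rw [Nat.card_zpowers, hx, pow_one])
  obtain ⟨k, hk, k', -, hle⟩ := hX.exists_conj_le_inf_conj hK (zpowers_le.mpr hxM)
  refine hH (k * g) trivial (fun hkg => hgH ⟨k * g, hkg, ?_⟩) ?_
  · simp [(QuotientGroup.eq_one_iff k).mpr hk]
  · refine hx ▸ Dvd.dvd.trans ?_ (card_dvd_of_le hle)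
    rw [card_map_of_injective (MulAut.conj k').injective, Nat.card_zpowers]
end

section
/- Fix a prime p, an integer e ≥ 1, and set q = p^e. For integers a, b, the F_p[F_qˣ]-modules V_a and V_b (where λ acts by x ↦ λ^a x, respectively x ↦ λ^b x, on F_q) are isomorphic if and only if a ≡ b·p^i (mod q - 1) for some integer i. -/
/-!
An additive bijection `φ` of `F = 𝔽_q` with `φ (λ^a x) = λ^b φ x` is `𝔽_p`-linear, so for a
generator `g` of `Fˣ` it intertwines multiplication by `f (g^a)` and by `f (g^b)` for every
`f ∈ 𝔽_p[X]`. Hence `g^b` is a root of the minimal polynomial of `g^a`, i.e. a Galois conjugate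
`(g^a)^(p^k)`, which says `b ≡ a p^k (mod q - 1)`. Conversely `x ↦ x^(p^k)` is such a `φ`.
As `p` has finite order modulo `q - 1`, the exponents `p^k` and `p^(-i)` range over the same set.
-/

open Polynomial

theorem exists_eq_mul_zpow_iff_exists_eq_mul_pow {M : Type*} [Monoid M] {u : Mˣ}
    (hu : IsOfFinOrder u) {a b : M} :
    (∃ i : ℤ, a = b * ↑(u ^ i)) ↔ ∃ k : ℕ, b = a * ↑(u ^ k) := by
  constructor
  · rintro ⟨i, rfl⟩
    obtain ⟨k, hk⟩ := hu.mem_powers_iff_mem_zpowers.2 ⟨-i, rfl⟩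
    refine ⟨k, ?_⟩
    rw [show u ^ k = u ^ (-i) from hk, mul_assoc, ← Units.val_mul, ← zpow_add, add_neg_cancel,
      zpow_zero, Units.val_one, mul_one]
  · rintro ⟨k, rfl⟩
    refine ⟨-k, ?_⟩
    rw [mul_assoc, ← Units.val_mul, ← zpow_natCast, ← zpow_add, add_neg_cancel, zpow_zero,
      Units.val_one, mul_one]

theorem LinearMap.map_aeval_mul {K A : Type*} [CommRing K] [CommRing A] [Algebra K A]
    (ψ : A →ₗ[K] A) {α β : A} (h : ∀ x, ψ (α * x) = β * ψ x) (f : K[X]) (x : A) :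
    ψ (aeval α f * x) = aeval β f * ψ x := by
  induction f using Polynomial.induction_on generalizing x with
  | C c => simp only [aeval_C, ← Algebra.smul_def, map_smul]
  | add f g hf hg => simp only [map_add, add_mul, hf, hg]
  | monomial n c ih =>
    rw [pow_succ, ← mul_assoc, map_mul (aeval α), map_mul (aeval β), aeval_X, aeval_X, mul_assoc,
      ih, h, mul_assoc]

theorem isConjRoot_of_map_mul_eq {K L : Type*} [Field K] [Field L] [Algebra K L]
    (ψ : L →ₗ[K] L) (hψ : ψ ≠ 0) {α β : L} (hα : IsIntegral K α)
    (h : ∀ x, ψ (α * x) = β * ψ x) : IsConjRoot K α β := by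
  obtain ⟨x, hx⟩ := DFunLike.ne_iff.1 hψ
  refine isConjRoot_of_aeval_eq_zero hα ?_
  have := ψ.map_aeval_mul h (minpoly K α) x
  rw [minpoly.aeval, zero_mul, map_zero, eq_comm, mul_eq_zero] at this
  exact this.resolve_right hx

theorem FiniteField.exists_eq_pow_card_pow_of_isConjRoot {K L : Type*} [Field K] [Fintype K]
    [Field L] [Finite L] [Algebra K L] {α β : L} (h : IsConjRoot K α β) :
    ∃ n : ℕ, β = α ^ Fintype.card K ^ n := by
  obtain ⟨σ, rfl⟩ := isConjRoot_iff_exists_algEquiv.1 h.symm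
  obtain ⟨n, rfl⟩ := (bijective_frobeniusAlgEquivOfAlgebraic_pow K L).2 σ
  refine ⟨n, ?_⟩
  simp only [AlgEquiv.coe_pow, coe_frobeniusAlgEquivOfAlgebraic_iterate]

namespace FiniteField

variable {F : Type*} [Field F] [Finite F] {p : ℕ} [Fact p.Prime] [CharP F p] {a b : ℤ}

theorem exists_modEq_mul_pow_of_addEquiv (φ : F ≃+ F)
    (hφ : ∀ (u : Fˣ) (x : F), φ (((u ^ a : Fˣ) : F) * x) = ((u ^ b : Fˣ) : F) * φ x) :
    ∃ k : ℕ, b ≡ a * p ^ k [ZMOD Nat.card Fˣ] := by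
  let := ZMod.algebra F p
  obtain ⟨g, hg⟩ := IsCyclic.exists_generator (α := Fˣ)
  have hφ0 : φ.toAddMonoidHom.toZModLinearMap p ≠ 0 :=
    DFunLike.ne_iff.2 ⟨1, show φ 1 ≠ 0 from AddEquivClass.map_ne_zero_iff.2 one_ne_zero⟩
  obtain ⟨k, hk⟩ := exists_eq_pow_card_pow_of_isConjRoot <|
    isConjRoot_of_map_mul_eq _ hφ0 (.of_finite (ZMod p) _) (hφ g)
  rw [ZMod.card, ← Units.val_pow_eq_pow_val, Units.val_inj, ← zpow_natCast, ← zpow_mul,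
    zpow_eq_zpow_iff_modEq, orderOf_eq_card_of_forall_mem_zpowers hg] at hk
  exact ⟨k, by exact_mod_cast hk⟩

theorem exists_addEquiv_of_modEq_mul_pow {k : ℕ} (h : b ≡ a * p ^ k [ZMOD Nat.card Fˣ]) :
    ∃ φ : F ≃+ F, ∀ (u : Fˣ) (x : F), φ (((u ^ a : Fˣ) : F) * x) = ((u ^ b : Fˣ) : F) * φ x := by
  refine ⟨(iterateFrobeniusEquiv F p k).toAddEquiv, fun u x => ?_⟩
  have hu : u ^ b = (u ^ a) ^ p ^ k := by
    rw [← zpow_natCast, ← zpow_mul, zpow_eq_zpow_iff_modEq]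
    exact h.of_dvd (by exact_mod_cast orderOf_dvd_natCard u)
  simp only [RingEquiv.toAddEquiv_eq_coe, RingEquiv.coe_toAddEquiv, iterateFrobeniusEquiv_def,
    mul_pow, hu, Units.val_pow_eq_pow_val]

theorem exists_addEquiv_iff_exists_modEq_mul_pow :
    (∃ φ : F ≃+ F, ∀ (u : Fˣ) (x : F), φ (((u ^ a : Fˣ) : F) * x) = ((u ^ b : Fˣ) : F) * φ x) ↔
      ∃ k : ℕ, b ≡ a * p ^ k [ZMOD Nat.card Fˣ] :=
  ⟨fun ⟨φ, hφ⟩ => exists_modEq_mul_pow_of_addEquiv φ hφ,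
    fun ⟨_, hk⟩ => exists_addEquiv_of_modEq_mul_pow hk⟩

end FiniteField

/-- Let `q = p^e`.  For integers `a, b`, the `F_p[F_qˣ]`-modules `V_a` and `V_b` (with the
action `λ·x = λ^a x`, resp. `λ^b x`, on `F_q`) are isomorphic if and only if
`a ≡ b·p^i (mod q - 1)` for some integer `i` (where `p` is invertible mod `q - 1`). -/
theorem stmt_7 (p e : ℕ) (hp : p.Prime) (he : 1 ≤ e)
    (F : Type*) [Field F] [Fintype F] (hF : Fintype.card F = p ^ e) (a b : ℤ) :
    (∃ φ : F ≃+ F, ∀ (u : Fˣ) (x : F),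
        φ (((u ^ a : Fˣ) : F) * x) = ((u ^ b : Fˣ) : F) * φ x) ↔
      ∃ (i : ℤ) (pu : (ZMod (p ^ e - 1))ˣ), (pu : ZMod (p ^ e - 1)) = (p : ZMod (p ^ e - 1)) ∧
        (a : ZMod (p ^ e - 1)) = (b : ZMod (p ^ e - 1)) * ((pu ^ i : (ZMod (p ^ e - 1))ˣ) : ZMod (p ^ e - 1)) := by
  have := Fact.mk hp
  have := charP_of_card_eq_prime_pow hF
  have hcard : Nat.card Fˣ = p ^ e - 1 := by rw [Nat.card_units, Nat.card_eq_fintype_card, hF]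
  have hpe : (p : ZMod (p ^ e - 1)) ^ e = 1 := by
    exact_mod_cast (ZMod.natCast_eq_natCast_iff _ _ _).2 (Nat.modEq_sub (Nat.one_le_pow e p hp.pos))
  let pu₀ := Units.ofPowEqOne _ e hpe (by omega)
  have hpu₀ : IsOfFinOrder pu₀ := isOfFinOrder_iff_pow_eq_one.2 ⟨e, he, Units.ext hpe⟩
  rw [FiniteField.exists_addEquiv_iff_exists_modEq_mul_pow (p := p), hcard]
  calc _ ↔ ∃ k : ℕ, (b : ZMod (p ^ e - 1)) = a * ↑(pu₀ ^ k) := by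
        simp [← ZMod.intCast_eq_intCast_iff, pu₀]
    _ ↔ ∃ i : ℤ, (a : ZMod (p ^ e - 1)) = b * ↑(pu₀ ^ i) :=
        (exists_eq_mul_zpow_iff_exists_eq_mul_pow hpu₀).symm
    _ ↔ _ := ⟨fun ⟨i, h⟩ => ⟨i, pu₀, rfl, h⟩,
        fun ⟨i, pu, hpu, h⟩ => ⟨i, by rwa [show pu = pu₀ from Units.ext hpu] at h⟩⟩
end

section
/- Let G be a finite group with a normal Sylow p-subgroup S such that C_G(S) ≤ S, and suppose α ∈ Aut(G) restricts to the identity on S. Then α is an inner automorphism given by conjugation by an element of S. -/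
/-!
Put `f g = g * (α g)⁻¹`. As `α` fixes the normal subgroup `S` pointwise, `f` takes values in
`A = C_G(S)`, which is abelian because `A ≤ S`, and `f` is a 1-cocycle for the conjugation action
of `G` on `A` that is trivial on `S`. Since `|A|` divides `|S|`, it is coprime to `[G : S]`, so
averaging `f` over a transversal of `S` and extracting a `[G : S]`-th root in `A` shows that `f` is a
coboundary `g ↦ g a g⁻¹ a⁻¹`; this says exactly that `α` is conjugation by `a ∈ A ≤ S`.
-/

open ConjAct IsMulCommutative

namespace groupCohomology

variable {G M : Type*} [Group G] [CommGroup M] [MulDistribMulAction G M] {N : Subgroup G}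
  {f : G → M}

theorem IsMulCocycle₁.smul_prod_mul_pow_index [Fintype (G ⧸ N)] (hf : IsMulCocycle₁ f)
    (hfN : ∀ n ∈ N, f n = 1) (g : G) :
    g • (∏ q : G ⧸ N, f q.out) * f g ^ N.index = ∏ q : G ⧸ N, f q.out := by
  have hcoset : ∀ x y : G, (x : G ⧸ N) = y → f x = f y := by
    intro x y hxy
    obtain ⟨n, hn, rfl⟩ : ∃ n ∈ N, x * n = y :=
      ⟨x⁻¹ * y, QuotientGroup.eq.mp hxy, mul_inv_cancel_left x y⟩
    rw [hf, hfN n hn, smul_one, one_mul]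
  calc g • (∏ q : G ⧸ N, f q.out) * f g ^ N.index
      = ∏ q : G ⧸ N, f (g * q.out) := by
        simp only [hf g, Finset.prod_mul_distrib, Finset.smul_prod', Finset.prod_const,
          Finset.card_univ, Subgroup.index_eq_card, Nat.card_eq_fintype_card]
    _ = ∏ q : G ⧸ N, f (g • q).out := Finset.prod_congr rfl fun q _ => hcoset _ _ <| by
        rw [QuotientGroup.out_eq']; exact MulAction.Quotient.coe_smul_out (H := N) g q
    _ = ∏ q : G ⧸ N, f q.out := Equiv.prod_comp (MulAction.toPerm g) fun q : G ⧸ N => f q.out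

theorem isMulCoboundary₁_of_coprime_index [N.FiniteIndex] (hNM : (Nat.card M).Coprime N.index)
    (hf : IsMulCocycle₁ f) (hfN : ∀ n ∈ N, f n = 1) : IsMulCoboundary₁ f := by
  have : Fintype (G ⧸ N) := Fintype.ofFinite _
  set X := ∏ q : G ⧸ N, f q.out
  set x := (powCoprime hNM).symm X⁻¹
  have hx : x ^ N.index = X⁻¹ := (powCoprime hNM).apply_symm_apply _
  refine ⟨x, fun g => (powCoprime hNM).injective ?_⟩
  show (g • x / x) ^ N.index = f g ^ N.index
  rw [div_pow, ← smul_pow', hx, smul_inv', div_inv_eq_mul, inv_mul_eq_iff_eq_mul]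
  exact (hf.smul_prod_mul_pow_index hfN g).symm

end groupCohomology

open groupCohomology

theorem Subgroup.isMulCommutative_centralizer_of_le {G : Type*} [Group G] {N : Subgroup G}
    (h : centralizer (N : Set G) ≤ N) : IsMulCommutative (centralizer (N : Set G)) :=
  ⟨⟨fun a b => Subtype.ext (mem_centralizer_iff.mp b.2 a (h a.2))⟩⟩

namespace MulAut

variable {G : Type*} [Group G]

theorem mul_inv_apply_mem_centralizer {N : Subgroup G} [N.Normal] {α : MulAut G}
    (hα : ∀ n ∈ N, α n = n) (g : G) : g * (α g)⁻¹ ∈ Subgroup.centralizer (N : Set G) := by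
  rw [Subgroup.mem_centralizer_iff]
  intro n hn
  have hconj : α (g⁻¹ * n * g) = g⁻¹ * n * g := hα _ (‹N.Normal›.conj_mem' n hn g)
  rw [map_mul, map_mul, map_inv, hα n hn] at hconj
  calc n * (g * (α g)⁻¹) = g * (g⁻¹ * n * g) * (α g)⁻¹ := by group
    _ = g * ((α g)⁻¹ * n * α g) * (α g)⁻¹ := by rw [hconj]
    _ = g * (α g)⁻¹ * n := by group

variable {A : Subgroup G} [A.Normal] (α : MulAut G) (hα : ∀ g, g * (α g)⁻¹ ∈ A)

def mulInvApply : ConjAct G → A := fun g => ⟨ofConjAct g * (α (ofConjAct g))⁻¹, hα _⟩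

theorem isMulCocycle₁_mulInvApply [IsMulCommutative A] : IsMulCocycle₁ (α.mulInvApply hα) := by
  intro g h
  apply Subtype.ext
  simp only [mulInvApply, Subgroup.coe_mul, Subgroup.val_conj_smul, ConjAct.smul_def, map_mul]
  group

theorem exists_mem_eq_conj_of_isMulCoboundary₁ [IsMulCommutative A]
    (h : IsMulCoboundary₁ (α.mulInvApply hα)) : ∃ a ∈ A, α = MulAut.conj a := by
  obtain ⟨a, ha⟩ := h
  refine ⟨a, a.2, MulEquiv.ext fun g => ?_⟩
  have hg := congrArg Subtype.val (ha (toConjAct g))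
  simp only [mulInvApply, Subgroup.coe_div, Subgroup.val_conj_smul, ConjAct.smul_def,
    ofConjAct_toConjAct] at hg
  calc α g = (g⁻¹ * (g * (α g)⁻¹))⁻¹ := by group
    _ = (g⁻¹ * (g * a * g⁻¹ / a))⁻¹ := by rw [hg]
    _ = MulAut.conj (a : G) g := by rw [MulAut.conj_apply, div_eq_mul_inv]; group

end MulAut

/-- If a finite group `G` has a normal Sylow `p`-subgroup `S` with `C_G(S) ≤ S`, then any
automorphism of `G` restricting to the identity on `S` is conjugation by an element of `S`. -/
theorem stmt_8 (p : ℕ) [Fact p.Prime] (G : Type*) [Group G] [Finite G]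
    (S : Sylow p G) (hnorm : (S : Subgroup G).Normal)
    (hcent : Subgroup.centralizer (S : Subgroup G) ≤ (S : Subgroup G))
    (α : MulAut G) (hα : ∀ x ∈ (S : Subgroup G), α x = x) :
    ∃ s ∈ (S : Subgroup G), α = MulAut.conj s := by
  have := hnorm
  have := (S : Subgroup G).isMulCommutative_centralizer_of_le hcent
  have hfix := α.mul_inv_apply_mem_centralizer hα
  have : Finite (ConjAct G) := .of_equiv G toConjAct.toEquiv
  set N := (S : Subgroup G).comap (ofConjAct : ConjAct G ≃* G).toMonoidHom
  have hcop : (Nat.card (Subgroup.centralizer ((S : Subgroup G) : Set G))).Coprime N.index := by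
    rw [Subgroup.index_comap_of_surjective _ ofConjAct.surjective]
    exact S.card_coprime_index.coprime_dvd_left (Subgroup.card_dvd_of_le hcent)
  have hN : ∀ n ∈ N, α.mulInvApply hfix n = 1 :=
    fun n hn => Subtype.ext (by simp [MulAut.mulInvApply, hα (ofConjAct n) hn])
  obtain ⟨a, ha, rfl⟩ := α.exists_mem_eq_conj_of_isMulCoboundary₁ hfix <|
    isMulCoboundary₁_of_coprime_index hcop (α.isMulCocycle₁_mulInvApply hfix) hN
  exact ⟨a, hcent ha, rfl⟩
end

section
/- Let G be a finite group, S ∈ Syl_p(G), and S₀ a normal subgroup of S. Suppose φ ∈ Aut(G) satisfies φ(S₀) = S₀ and φ|_{S₀} normalizes Aut_S(S₀) inside Aut(S₀). Then there exists φ' ∈ Aut(G) with φ'|_{S₀} = φ|_{S₀}, φ'(S) = S, and φ' ≡ φ modulo Inn(G). -/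
/-!
Let `C = C_G(S₀)`. Since `S` normalizes `S₀` it normalizes `C`, so `SC` is a subgroup, and the
fact that `φ|_{S₀}` normalizes `Aut_S(S₀)` gives `φ(S) ≤ SC`. Sylow's theorem in `SC` gives
`s c ∈ SC` conjugating `φ(S)` to `S`, hence `c` alone does; as `c` centralizes `S₀ = φ(S₀)`,
the automorphism `φ' = c_c ∘ φ` agrees with `φ` on `S₀`.
-/

open Pointwise

namespace Subgroup

variable {G : Type*} [Group G]

theorem normalizer_le_normalizer_centralizer (H : Subgroup G) :
    normalizer (H : Set G) ≤ normalizer (centralizer (H : Set G) : Set G) :=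
  le_normalizer_of_normal_subgroupOf (centralizer_le_normalizer _)

theorem inv_mul_mem_centralizer_of_conj_eq {s : Set G} {g h : G}
    (hgh : ∀ x ∈ s, g * x * g⁻¹ = h * x * h⁻¹) : h⁻¹ * g ∈ centralizer s := by
  intro x hx
  calc x * (h⁻¹ * g) = h⁻¹ * (h * x * h⁻¹) * g := by group
    _ = h⁻¹ * (g * x * g⁻¹) * g := by rw [hgh x hx]
    _ = h⁻¹ * g * x := by group

theorem map_le_sup_centralizer_of_forall_exists_conj_eq {S S₀ : Subgroup G} {φ : MulAut G}
    (hS₀ : S₀ ≤ S₀.map φ.toMonoidHom)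
    (hconj : ∀ s ∈ S, ∃ s' ∈ S, ∀ x ∈ S₀, φ (s * x * s⁻¹) = s' * φ x * s'⁻¹) :
    S.map φ.toMonoidHom ≤ S ⊔ centralizer (S₀ : Set G) := by
  rintro _ ⟨s, hs, rfl⟩
  obtain ⟨s', hs', hs'conj⟩ := hconj s hs
  have hcent : s'⁻¹ * φ s ∈ centralizer (S₀ : Set G) := by
    refine inv_mul_mem_centralizer_of_conj_eq fun y hy => ?_
    obtain ⟨x, hx, rfl⟩ := hS₀ hy
    simpa using hs'conj x hx
  simpa using mul_mem (mem_sup_left hs') (mem_sup_right hcent)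

end Subgroup

namespace Sylow

theorem exists_mem_smul_eq_of_le_sup {p : ℕ} [Fact p.Prime] {G : Type*} [Group G] [Finite G]
    {P Q : Sylow p G} {N : Subgroup G} (hPN : (P : Subgroup G) ≤ Subgroup.normalizer (N : Set G))
    (hQ : (Q : Subgroup G) ≤ (P : Subgroup G) ⊔ N) : ∃ n ∈ N, n • Q = P := by
  obtain ⟨k, hk⟩ := MulAction.exists_smul_eq ((P : Subgroup G) ⊔ N : Subgroup G) (Q.subtype hQ)
    (P.subtype le_sup_left)
  rw [smul_subtype] at hk
  replace hk : (k : G) • Q = P := subtype_injective hk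
  obtain ⟨s, hs, n, hn, hsn⟩ : (k : G) ∈ ((P : Subgroup G) : Set G) * N := by
    rw [← Subgroup.coe_mul_of_left_le_normalizer_right _ _ hPN]; exact k.2
  refine ⟨n, hn, ?_⟩
  calc n • Q = s⁻¹ • ((k : G) • Q) := by rw [smul_smul, ← hsn, inv_mul_cancel_left]
    _ = P := by rw [hk, smul_eq_iff_mem_normalizer]; exact Subgroup.le_normalizer (inv_mem hs)

end Sylow

theorem stmt_10_general (p : ℕ) [Fact p.Prime] (G : Type*) [Group G] [Finite G]
    (S : Sylow p G) (S₀ : Subgroup G)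
    (hS₀n : ∀ s ∈ (S : Subgroup G), ∀ x ∈ S₀, s * x * s⁻¹ ∈ S₀)
    (φ : MulAut G) (hφS₀ : Subgroup.map φ.toMonoidHom S₀ = S₀)
    -- `φ|_{S₀} ∘ c_s ∘ (φ|_{S₀})⁻¹ ∈ Aut_S(S₀)` for all `s ∈ S` …
    (hnorm₁ : ∀ s ∈ (S : Subgroup G), ∃ s' ∈ (S : Subgroup G),
      ∀ x ∈ S₀, φ (s * x * s⁻¹) = s' * φ x * s'⁻¹) :
    ∃ φ' : MulAut G, (∀ x ∈ S₀, φ' x = φ x) ∧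
      Subgroup.map φ'.toMonoidHom (S : Subgroup G) = (S : Subgroup G) ∧
      ∃ g : G, ∀ x : G, φ' x = g * φ x * g⁻¹ := by
  have hSC : (S : Subgroup G) ≤ Subgroup.normalizer (Subgroup.centralizer (S₀ : Set G) : Set G) :=
    (Subgroup.le_normalizer_iff.mpr hS₀n).trans S₀.normalizer_le_normalizer_centralizer
  obtain ⟨c, hc, hcS⟩ := Sylow.exists_mem_smul_eq_of_le_sup (Q := φ • S) hSC
    (Subgroup.map_le_sup_centralizer_of_forall_exists_conj_eq hφS₀.ge hnorm₁)
  refine ⟨MulAut.conj c * φ, fun x hx => ?_, ?_, c, fun x => rfl⟩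
  · have hφx : φ x ∈ S₀ := hφS₀ ▸ Subgroup.mem_map_of_mem _ hx
    exact (congrArg (· * c⁻¹) (hc (φ x) hφx)).symm.trans (mul_inv_cancel_right _ _)
  · exact congrArg Sylow.toSubgroup ((mul_smul (MulAut.conj c) φ S).trans hcS)

/-- Let `G` be a finite group, `S ∈ Syl_p(G)`, and `S₀ ⊴ S`.  If `φ ∈ Aut(G)` satisfies
`φ(S₀) = S₀` and `φ|_{S₀}` normalizes `Aut_S(S₀)` inside `Aut(S₀)`, then there is
`φ' ∈ Aut(G)` with `φ'|_{S₀} = φ|_{S₀}`, `φ'(S) = S`, and `φ' ≡ φ (mod Inn(G))`. -/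
theorem stmt_10 (p : ℕ) [Fact p.Prime] (G : Type*) [Group G] [Finite G]
    (S : Sylow p G) (S₀ : Subgroup G) (hS₀S : S₀ ≤ (S : Subgroup G))
    (hS₀n : ∀ s ∈ (S : Subgroup G), ∀ x ∈ S₀, s * x * s⁻¹ ∈ S₀)
    (φ : MulAut G) (hφS₀ : Subgroup.map φ.toMonoidHom S₀ = S₀)
    -- `φ|_{S₀} ∘ c_s ∘ (φ|_{S₀})⁻¹ ∈ Aut_S(S₀)` for all `s ∈ S` …
    (hnorm₁ : ∀ s ∈ (S : Subgroup G), ∃ s' ∈ (S : Subgroup G),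
      ∀ x ∈ S₀, φ (s * x * s⁻¹) = s' * φ x * s'⁻¹)
    -- … and conjugation by `φ|_{S₀}` maps `Aut_S(S₀)` onto `Aut_S(S₀)`:
    (hnorm₂ : ∀ s' ∈ (S : Subgroup G), ∃ s ∈ (S : Subgroup G),
      ∀ x ∈ S₀, φ (s * x * s⁻¹) = s' * φ x * s'⁻¹) :
    ∃ φ' : MulAut G, (∀ x ∈ S₀, φ' x = φ x) ∧
      Subgroup.map φ'.toMonoidHom (S : Subgroup G) = (S : Subgroup G) ∧
      ∃ g : G, ∀ x : G, φ' x = g * φ x * g⁻¹ :=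
  stmt_10_general p G S S₀ hS₀n φ hφS₀ hnorm₁
end

section
/- Let G be a finite group with S ∈ Syl_p(G). The restriction homomorphism from the group of automorphisms of G normalizing S to Aut(S) induces: (a) the map κ̄_G : Out(G) → Out(S, F_S(G)) is surjective if and only if every fusion-preserving automorphism φ ∈ Aut(S, F_S(G)) extends to an automorphism of G; and (b) Ker(κ̄_G) ≅ C_{Aut(G)}(S)/Aut_{C_G(S)}(G). -/
/-! Automorphisms of fusion systems: the homomorphism `κ̄_G : Out(G) → Out(S, F_S(G))`. -/

section Defs

variable {G : Type*} [Group G]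

/-- One direction of fusion preservation for an automorphism `φ` of `S ≤ G`:
`φ ∘ Hom_G(A, B) ∘ φ⁻¹ ⊆ Hom_G(φA, φB)` for all `A, B ≤ S`, expressed elementwise. -/
def FusionPreservingAux (S : Subgroup G) (φ : S ≃* S) : Prop :=
  ∀ (g : G) (A : Subgroup G) (hA : A ≤ S) (hgA : ∀ a ∈ A, g * a * g⁻¹ ∈ S),
    ∃ h : G, ∀ (a : G) (ha : a ∈ A),
      ((φ ⟨g * a * g⁻¹, hgA a ha⟩ : S) : G) = h * ((φ ⟨a, hA ha⟩ : S) : G) * h⁻¹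

/-- `φ ∈ Aut(S)` is fusion preserving with respect to `F_S(G)`:
`φ ∘ Hom_G(A, B) ∘ φ⁻¹ = Hom_G(φA, φB)` for all `A, B ≤ S`. -/
def IsFusionPreserving (S : Subgroup G) (φ : S ≃* S) : Prop :=
  FusionPreservingAux S φ ∧ FusionPreservingAux S φ.symm

/-- The subgroup `Inn(G) ≤ Aut(G)` of inner automorphisms. -/
def Inn (G : Type*) [Group G] : Subgroup (MulAut G) :=
  (MulAut.conj : G →* MulAut G).range

instance Inn.normal : (Inn G).Normal := by
  constructor
  rintro x ⟨g, rfl⟩ α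
  refine ⟨α g, ?_⟩
  ext y
  simp [MulAut.conj_apply, mul_assoc]

/-- `C_{Aut(G)}(S)`: the automorphisms of `G` restricting to the identity on `S`. -/
def fixAut (S : Subgroup G) : Subgroup (MulAut G) where
  carrier := {α | ∀ x ∈ S, α x = x}
  one_mem' := fun x _ => rfl
  mul_mem' := by
    intro a b ha hb x hx
    have h : (a * b) x = a (b x) := rfl
    rw [h, hb x hx, ha x hx]
  inv_mem' := by
    intro a ha x hx
    calc a⁻¹ x = a⁻¹ (a x) := by rw [ha x hx]
    _ = x := by simp

/-- `Aut_{C_G(S)}(G)`: the automorphisms of `G` given by conjugation by elements of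
`C_G(S)`. -/
def innC (S : Subgroup G) : Subgroup (MulAut G) :=
  (Subgroup.centralizer (S : Set G)).map (MulAut.conj : G →* MulAut G)

theorem innC_le_fixAut (S : Subgroup G) : innC S ≤ fixAut S := by
  rintro _ ⟨c, hc, rfl⟩ x hx
  have h := (Subgroup.mem_centralizer_iff.mp hc) x hx
  show c * x * c⁻¹ = x
  rw [mul_inv_eq_iff_eq_mul, ← h]

instance innC_subgroupOf_normal {S : Subgroup G} : ((innC S).subgroupOf (fixAut S)).Normal := by
  constructor
  intro x hx α
  rw [Subgroup.mem_subgroupOf] at hx ⊢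
  obtain ⟨c, hc, hconj⟩ := hx
  replace hc : c ∈ Subgroup.centralizer (S : Set G) := hc
  refine ⟨(α : MulAut G) c, ?_, ?_⟩
  · show (α : MulAut G) c ∈ Subgroup.centralizer (S : Set G)
    rw [Subgroup.mem_centralizer_iff]
    intro y hy
    have hy' : (α : MulAut G) y = y := α.2 y hy
    have h := (Subgroup.mem_centralizer_iff.mp hc) y hy
    calc y * (α : MulAut G) c = (α : MulAut G) y * (α : MulAut G) c := by rw [hy']
    _ = (α : MulAut G) (y * c) := by rw [map_mul]
    _ = (α : MulAut G) (c * y) := by rw [h]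
    _ = (α : MulAut G) c * (α : MulAut G) y := by rw [map_mul]
    _ = (α : MulAut G) c * y := by rw [hy']
  · have : ((α * x * α⁻¹ : fixAut S) : MulAut G)
        = (α : MulAut G) * (x : MulAut G) * (α : MulAut G)⁻¹ := rfl
    rw [this, ← hconj]
    ext y
    simp [MulAut.conj_apply, mul_assoc]

/-- The normalizer of `S` is preserved by any automorphism preserving `S`. -/
theorem fusion_aux_norm (S : Subgroup G) (α : MulAut G) (hα : ∀ x : G, x ∈ S ↔ α x ∈ S)
    {n : G} (hn : n ∈ Subgroup.normalizer (S : Set G)) : α n ∈ Subgroup.normalizer (S : Set G) := by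
  rw [Subgroup.mem_normalizer_iff] at hn ⊢
  intro h
  have key : ∀ y : G, α n * α y * (α n)⁻¹ = α (n * y * n⁻¹) := by
    intro y; rw [map_mul, map_mul, map_inv]
  constructor
  · intro hh
    have h1 : α.symm h ∈ S := by
      rw [hα (α.symm h)]
      simpa using hh
    have h2 : n * α.symm h * n⁻¹ ∈ S := (hn _).mp h1
    have h3 := (hα _).mp h2
    rw [← key] at h3
    simpa using h3
  · intro hh
    have h1 : α.symm h ∈ S := by
      have h2 : n * α.symm h * n⁻¹ ∈ S := by
        rw [hα (n * α.symm h * n⁻¹), ← key]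
        simpa using hh
      exact (hn _).mpr h2
    rw [hα (α.symm h)] at h1
    simpa using h1

/-- Automorphisms of `G` preserving `S` whose restriction to `S` lies in `Aut_{N_G(S)}(S)`;
the kernel of `κ̄_G` is the image of this subgroup in `Out(G)`. -/
def kerAux (S : Subgroup G) : Subgroup (MulAut G) where
  carrier := {α | (∀ x : G, x ∈ S ↔ α x ∈ S) ∧
    ∃ n ∈ Subgroup.normalizer (S : Set G), ∀ x ∈ S, α x = n * x * n⁻¹}
  one_mem' := ⟨fun _ => Iff.rfl, 1, (Subgroup.normalizer (S : Set G)).one_mem, fun x _ => by simp⟩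
  mul_mem' := by
    rintro a b ⟨ha1, na, hna, ha2⟩ ⟨hb1, nb, hnb, hb2⟩
    constructor
    · intro x
      have h : (a * b) x = a (b x) := rfl
      rw [h]
      exact (hb1 x).trans (ha1 (b x))
    · refine ⟨na * nb, (Subgroup.normalizer (S : Set G)).mul_mem hna hnb, ?_⟩
      intro x hx
      have hmem : nb * x * nb⁻¹ ∈ S := (Subgroup.mem_normalizer_iff.mp hnb x).mp hx
      have h : (a * b) x = a (b x) := rfl
      rw [h, hb2 x hx, ha2 _ hmem]
      group
  inv_mem' := by
    rintro a ⟨ha1, na, hna, ha2⟩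
    have hinv : ∀ x : G, x ∈ S ↔ a⁻¹ x ∈ S := by
      intro x
      have h := ha1 (a⁻¹ x)
      have h2 : a (a⁻¹ x) = x := by simp
      rw [h2] at h
      exact h.symm
    constructor
    · exact hinv
    · refine ⟨na⁻¹, (Subgroup.normalizer (S : Set G)).inv_mem hna, ?_⟩
      intro x hx
      have hm : na⁻¹ * x * na⁻¹⁻¹ ∈ S :=
        (Subgroup.mem_normalizer_iff.mp ((Subgroup.normalizer (S : Set G)).inv_mem hna) x).mp hx
      apply a.injective
      have h2 : a (a⁻¹ x) = x := by simp
      rw [h2, ha2 _ hm]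
      group

end Defs

/-! For (a), an extension `α` of `φ ∘ c_n` with `n ∈ N_G(S)` gives the extension `α ∘ c_n⁻¹`
of `φ`; conversely, an automorphism extending `φ` maps `S` into `S`, so `α⁻¹(S)` is a `p`-subgroup
containing `S`, and equals `S` by maximality of Sylow subgroups.

For (b), every automorphism in the preimage of `Ker(κ̄_G)` has the form `c_n ∘ β` with
`β ∈ C_{Aut(G)}(S)`, so `C_{Aut(G)}(S) → Out(G)` maps onto `Ker(κ̄_G)`; its kernel consists of
the inner automorphisms `c_g` fixing `S` pointwise, that is, those with `g ∈ C_G(S)`. -/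

section KappaBar

variable {G : Type*} [Group G]

theorem Sylow.mem_iff_apply_mem_of_mapsTo {p : ℕ} (P : Sylow p G) (α : MulAut G)
    (hα : ∀ x ∈ (P : Subgroup G), α x ∈ (P : Subgroup G)) (x : G) :
    x ∈ (P : Subgroup G) ↔ α x ∈ (P : Subgroup G) :=
  SetLike.ext_iff.mp
    (P.is_maximal' (P.isPGroup'.comap_of_injective α.toMonoidHom α.injective) hα).symm x

theorem Sylow.exists_extension_conj_iff {p : ℕ} (P : Sylow p G)
    (φ : ↥(P : Subgroup G) ≃* ↥(P : Subgroup G)) :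
    (∃ (α : MulAut G) (n : G) (hn : n ∈ Subgroup.normalizer ((P : Subgroup G) : Set G)),
        (∀ x : G, x ∈ (P : Subgroup G) ↔ α x ∈ (P : Subgroup G)) ∧
        ∀ (x : G) (hx : x ∈ (P : Subgroup G)),
          α x = ((φ ⟨n * x * n⁻¹, (Subgroup.mem_normalizer_iff.mp hn x).mp hx⟩ :
            ↥(P : Subgroup G)) : G)) ↔
      ∃ α : MulAut G, ∀ (x : G) (hx : x ∈ (P : Subgroup G)),
        α x = ((φ ⟨x, hx⟩ : ↥(P : Subgroup G)) : G) := by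
  constructor
  · rintro ⟨α, n, hn, -, hα⟩
    refine ⟨α * MulAut.conj n⁻¹, fun x hx => ?_⟩
    have hx' : n⁻¹ * x * n⁻¹⁻¹ ∈ (P : Subgroup G) :=
      (Subgroup.mem_normalizer_iff.mp (Subgroup.inv_mem _ hn) x).mp hx
    rw [MulAut.mul_apply, MulAut.conj_apply, hα _ hx']
    congr 3
    group
  · rintro ⟨α, hα⟩
    have hmaps : ∀ x ∈ (P : Subgroup G), α x ∈ (P : Subgroup G) := fun x hx =>
      (hα x hx).symm ▸ (φ ⟨x, hx⟩).2
    refine ⟨α, 1, Subgroup.one_mem _, P.mem_iff_apply_mem_of_mapsTo α hmaps, fun x hx => ?_⟩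
    rw [hα x hx]
    congr 3
    group

theorem fixAut_le_kerAux (S : Subgroup G) : fixAut S ≤ kerAux S := by
  intro α hα
  refine ⟨fun x => ⟨fun hx => (hα x hx).symm ▸ hx, fun hx => ?_⟩,
    1, Subgroup.one_mem _, fun x hx => by simp [hα x hx]⟩
  have hinv : α⁻¹ (α x) = α x := (fixAut S).inv_mem hα _ hx
  rw [MulAut.inv_apply_self] at hinv
  rwa [hinv]

theorem conj_mem_fixAut_iff {S : Subgroup G} {g : G} :
    MulAut.conj g ∈ fixAut S ↔ g ∈ Subgroup.centralizer (S : Set G) := by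
  simp only [Subgroup.mem_centralizer_iff, SetLike.mem_coe]
  refine forall₂_congr fun x _ => ?_
  rw [MulAut.conj_apply, mul_inv_eq_iff_eq_mul, eq_comm]

theorem exists_conj_inv_mul_mem_fixAut {S : Subgroup G} {α : MulAut G} (hα : α ∈ kerAux S) :
    ∃ n : G, (MulAut.conj n)⁻¹ * α ∈ fixAut S := by
  obtain ⟨-, n, -, hn⟩ := hα
  refine ⟨n, fun x hx => ?_⟩
  rw [MulAut.mul_apply, hn x hx, ← map_inv, MulAut.conj_apply]
  group

def fixAutToOut (S : Subgroup G) : fixAut S →* (kerAux S).map (QuotientGroup.mk' (Inn G)) :=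
  ((QuotientGroup.mk' (Inn G)).comp (fixAut S).subtype).codRestrict _
    fun β => ⟨β, fixAut_le_kerAux S β.2, rfl⟩

theorem fixAutToOut_surjective (S : Subgroup G) : Function.Surjective (fixAutToOut S) := by
  rintro ⟨_, α, hα, rfl⟩
  obtain ⟨n, hn⟩ := exists_conj_inv_mul_mem_fixAut hα
  refine ⟨⟨_, hn⟩, Subtype.ext ?_⟩
  have hconj : QuotientGroup.mk' (Inn G) (MulAut.conj n) = 1 :=
    (QuotientGroup.eq_one_iff _).mpr ⟨n, rfl⟩
  change QuotientGroup.mk' (Inn G) ((MulAut.conj n)⁻¹ * α) = QuotientGroup.mk' (Inn G) α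
  rw [map_mul, map_inv, hconj, inv_one, one_mul]

theorem ker_fixAutToOut (S : Subgroup G) :
    (fixAutToOut S).ker = (innC S).subgroupOf (fixAut S) := by
  ext β
  rw [MonoidHom.mem_ker, Subgroup.mem_subgroupOf, ← Subtype.val_inj]
  refine (QuotientGroup.eq_one_iff (β : MulAut G)).trans ?_
  constructor
  · rintro ⟨g, hg⟩
    exact ⟨g, conj_mem_fixAut_iff.mp (hg ▸ β.2), hg⟩
  · rintro ⟨g, -, hg⟩
    exact ⟨g, hg⟩

noncomputable def kerAuxOutEquiv (S : Subgroup G) :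
    (kerAux S).map (QuotientGroup.mk' (Inn G)) ≃* fixAut S ⧸ (innC S).subgroupOf (fixAut S) :=
  ((QuotientGroup.quotientMulEquivOfEq (ker_fixAutToOut S).symm).trans
    (QuotientGroup.quotientKerEquivOfSurjective _ (fixAutToOut_surjective S))).symm

end KappaBar

theorem stmt_12_general (p : ℕ) (G : Type*) [Group G] (S : Sylow p G) :
    -- (a): surjectivity of `κ̄_G` ↔ every fusion preserving automorphism extends
    ((∀ φ : ↥(S : Subgroup G) ≃* ↥(S : Subgroup G), IsFusionPreserving (S : Subgroup G) φ →
        ∃ (α : MulAut G) (n : G) (hn : n ∈ Subgroup.normalizer ((S : Subgroup G) : Set G)),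
          (∀ x : G, x ∈ (S : Subgroup G) ↔ α x ∈ (S : Subgroup G)) ∧
          ∀ (x : G) (hx : x ∈ (S : Subgroup G)),
            α x = ((φ ⟨n * x * n⁻¹,
              (Subgroup.mem_normalizer_iff.mp hn x).mp hx⟩ : ↥(S : Subgroup G)) : G)) ↔
      (∀ φ : ↥(S : Subgroup G) ≃* ↥(S : Subgroup G), IsFusionPreserving (S : Subgroup G) φ →
        ∃ α : MulAut G, ∀ (x : G) (hx : x ∈ (S : Subgroup G)),
          α x = ((φ ⟨x, hx⟩ : ↥(S : Subgroup G)) : G))) ∧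
    -- (b): `Ker(κ̄_G) ≅ C_{Aut(G)}(S) / Aut_{C_G(S)}(G)`
    Nonempty
      (↥((kerAux (S : Subgroup G)).map (QuotientGroup.mk' (Inn G))) ≃*
        (↥(fixAut (S : Subgroup G)) ⧸
          (innC (S : Subgroup G)).subgroupOf (fixAut (S : Subgroup G)))) :=
  ⟨forall_congr' fun φ => imp_congr_right fun _ => S.exists_extension_conj_iff φ,
    ⟨kerAuxOutEquiv (S : Subgroup G)⟩⟩

/-- Let `G` be a finite group with `S ∈ Syl_p(G)`.  Then:
(a) `κ̄_G : Out(G) → Out(S, F_S(G))` is surjective if and only if every fusion preserving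
automorphism of `S` extends to an automorphism of `G`; and
(b) `Ker(κ̄_G) ≅ C_{Aut(G)}(S) / Aut_{C_G(S)}(G)`. -/
theorem stmt_12 (p : ℕ) [Fact p.Prime] (G : Type*) [Group G] [Finite G] (S : Sylow p G) :
    -- (a): surjectivity of `κ̄_G` ↔ every fusion preserving automorphism extends
    ((∀ φ : ↥(S : Subgroup G) ≃* ↥(S : Subgroup G), IsFusionPreserving (S : Subgroup G) φ →
        ∃ (α : MulAut G) (n : G) (hn : n ∈ Subgroup.normalizer ((S : Subgroup G) : Set G)),
          (∀ x : G, x ∈ (S : Subgroup G) ↔ α x ∈ (S : Subgroup G)) ∧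
          ∀ (x : G) (hx : x ∈ (S : Subgroup G)),
            α x = ((φ ⟨n * x * n⁻¹,
              (Subgroup.mem_normalizer_iff.mp hn x).mp hx⟩ : ↥(S : Subgroup G)) : G)) ↔
      (∀ φ : ↥(S : Subgroup G) ≃* ↥(S : Subgroup G), IsFusionPreserving (S : Subgroup G) φ →
        ∃ α : MulAut G, ∀ (x : G) (hx : x ∈ (S : Subgroup G)),
          α x = ((φ ⟨x, hx⟩ : ↥(S : Subgroup G)) : G))) ∧
    -- (b): `Ker(κ̄_G) ≅ C_{Aut(G)}(S) / Aut_{C_G(S)}(G)`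
    Nonempty
      (↥((kerAux (S : Subgroup G)).map (QuotientGroup.mk' (Inn G))) ≃*
        (↥(fixAut (S : Subgroup G)) ⧸
          (innC (S : Subgroup G)).subgroupOf (fixAut (S : Subgroup G)))) :=
  stmt_12_general p G S
end

section
/- Let Λ be a lattice (free ℤ-module of finite rank) with a positive definite symmetric bilinear form, and set r = min{‖x‖ : 0 ≠ x ∈ Λ}. Suppose (x, x) ∈ r²ℤ for all x ∈ Λ. Let w be an isometry of Λ, let m ≥ 1, and let x ∈ Λ satisfy ‖x‖ < (m·r)/2 and w(x) ≡ x (mod mΛ). Then w(x) = x. -/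
lemma bil_nonneg {Λ : Type*} [AddCommGroup Λ] [Module ℤ Λ]
    (B : Λ →ₗ[ℤ] Λ →ₗ[ℤ] ℤ) (hpos : ∀ x : Λ, x ≠ 0 → 0 < B x x)
    (z : Λ) : 0 ≤ B z z := by
  by_cases h : z = 0
  · simp [h]
  · exact (hpos z h).le

lemma bil_cs {Λ : Type*} [AddCommGroup Λ] [Module ℤ Λ]
    (B : Λ →ₗ[ℤ] Λ →ₗ[ℤ] ℤ) (hsymm : ∀ x y : Λ, B x y = B y x)
    (hpos : ∀ x : Λ, x ≠ 0 → 0 < B x x)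
    (u v : Λ) : (B u v) ^ 2 ≤ B u u * B v v := by
  by_cases h : u = 0
  · simp [h]
  have ha : 0 < B u u := hpos u h
  have hnn := bil_nonneg B hpos ((B u u) • v - (B u v) • u)
  have hexp : B ((B u u) • v - (B u v) • u) ((B u u) • v - (B u v) • u)
      = B u u * (B u u * B v v - (B u v) ^ 2) := by
    simp only [map_sub, map_zsmul, LinearMap.sub_apply,
      LinearMap.smul_apply, smul_eq_mul]
    rw [hsymm v u]
    ring
  rw [hexp] at hnn
  nlinarith

/-- Let `Λ` be a lattice (free `ℤ`-module of finite rank) with a positive definite symmetric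
bilinear form `B`, let `r² ∈ ℤ` be the minimum of `B x x` over nonzero `x`, and assume
`B x x ∈ r²ℤ` for all `x`.  If `w` is an isometry of `Λ`, `m ≥ 1`, and `x ∈ Λ` satisfies
`‖x‖ < m·r/2` and `w(x) ≡ x (mod mΛ)`, then `w(x) = x`. -/
theorem stmt_15 (Λ : Type*) [AddCommGroup Λ] [Module ℤ Λ]
    [Module.Free ℤ Λ] [Module.Finite ℤ Λ]
    (B : Λ →ₗ[ℤ] Λ →ₗ[ℤ] ℤ)
    (hsymm : ∀ x y : Λ, B x y = B y x)
    (hpos : ∀ x : Λ, x ≠ 0 → 0 < B x x)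
    (r2 : ℤ)
    (hmin : ∀ x : Λ, x ≠ 0 → r2 ≤ B x x)
    (hmin' : ∃ x : Λ, x ≠ 0 ∧ B x x = r2)
    (hdiv : ∀ x : Λ, r2 ∣ B x x)
    (w : Λ ≃ₗ[ℤ] Λ) (hw : ∀ x y : Λ, B (w x) (w y) = B x y)
    (m : ℕ) (hm : 1 ≤ m) (x : Λ)
    (hnorm : Real.sqrt ((B x x : ℤ) : ℝ) < (m : ℝ) * Real.sqrt ((r2 : ℤ) : ℝ) / 2)
    (hcong : ∃ y : Λ, w x - x = (m : ℤ) • y) :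
    w x = x := by
  obtain ⟨y, hy⟩ := hcong
  -- r2 > 0
  obtain ⟨z, hz, hz2⟩ := hmin'
  have hr2 : 0 < r2 := hz2 ▸ hpos z hz
  have hBx : 0 ≤ B x x := bil_nonneg B hpos x
  -- from hnorm : 4 * B x x < m^2 * r2
  have hkey : 4 * (B x x : ℝ) < (m : ℝ) ^ 2 * (r2 : ℝ) := by
    have h1 : (0:ℝ) ≤ Real.sqrt ((B x x : ℤ) : ℝ) := Real.sqrt_nonneg _
    have h2 : Real.sqrt ((B x x : ℤ) : ℝ) ^ 2 = (B x x : ℝ) := by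
      rw [Real.sq_sqrt]; exact_mod_cast hBx
    have h3 : Real.sqrt ((r2 : ℤ) : ℝ) ^ 2 = (r2 : ℝ) := by
      rw [Real.sq_sqrt]; exact_mod_cast hr2.le
    have hm' : (1:ℝ) ≤ (m:ℝ) := by exact_mod_cast hm
    nlinarith [Real.sqrt_nonneg ((r2 : ℤ) : ℝ)]
  have hkeyZ : 4 * B x x < (m : ℤ) ^ 2 * r2 := by exact_mod_cast hkey
  -- compute B d d where d = w x - x
  have hd : B (w x - x) (w x - x) = 2 * B x x - 2 * B (w x) x := by
    simp only [map_sub, LinearMap.sub_apply]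
    rw [hw x x, hsymm x (w x)]
    ring
  -- Cauchy-Schwarz: (B (w x) x)^2 ≤ B x x * B x x
  have hcs : (B (w x) x) ^ 2 ≤ B x x * B x x := by
    have := bil_cs B hsymm hpos (w x) x
    rwa [hw x x] at this
  have hlow : -(B x x) ≤ B (w x) x := by nlinarith
  have hdd : B (w x - x) (w x - x) ≤ 4 * B x x := by rw [hd]; linarith
  by_contra hne
  have hyne : y ≠ 0 := by
    rintro rfl
    simp at hy
    exact hne (sub_eq_zero.mp hy)
  have hBy : r2 ≤ B y y := hmin y hyne
  have : B (w x - x) (w x - x) = (m : ℤ) ^ 2 * B y y := by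
    rw [hy]; simp [map_zsmul, smul_eq_mul]; ring
  have hmZ : (1:ℤ) ≤ (m:ℤ) := by exact_mod_cast hm
  nlinarith
end

section
/- Let H be a group, Z ≤ Z(H) a central subgroup of prime order p, and P a p-subgroup of H containing Z. Then the index of C_H(P)/Z in C_{H/Z}(P/Z) is at most |P/Φ(P)|, where Φ(P) is the Frattini subgroup of P. -/
/-!
An element `h` centralizing `P` modulo the central subgroup `Z` gives a homomorphism
`x ↦ ⁅h, x⁆` from `P` to `Z`, and `h ↦ (x ↦ ⁅h, x⁆)` is in turn a homomorphism with kernel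
`C_H(P)`; so the index is the size of its image, at most `|Hom(P, Z)|`. As `Z` has prime order,
the kernel of a nontrivial `P →* Z` has prime index, hence is maximal and contains `Φ(P)`, so all
these homomorphisms factor through `P ⧸ Φ(P)`. Embedding the cyclic group `Z` into `ℂˣ`, character
duality for the abelianization of `P ⧸ Φ(P)` bounds their number by `|P ⧸ Φ(P)|`.
-/

open Subgroup

theorem Subgroup.isCoatom_of_prime_index {G : Type*} [Group G] {K : Subgroup G}
    (hK : K.index.Prime) : IsCoatom K := by
  refine ⟨fun hK_top => by simp [hK_top, Nat.not_prime_one] at hK, fun L hKL => ?_⟩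
  rcases hK.eq_one_or_self_of_dvd _ (index_dvd_of_le hKL.le) with hL | hL
  · exact index_eq_one.mp hL
  · have h := relIndex_mul_index hKL.le
    rw [hL, Nat.mul_eq_right hK.ne_zero, relIndex_eq_one] at h
    exact absurd h hKL.not_ge

theorem frattini_le_ker_of_prime_card {G A : Type*} [Group G] [Group A]
    (hA : (Nat.card A).Prime) (f : G →* A) : frattini G ≤ f.ker := by
  have : Finite A := Nat.finite_of_card_ne_zero hA.ne_zero
  rcases hA.eq_one_or_self_of_dvd _ (card_subgroup_dvd_card f.range) with h | h
  · rw [← index_ker, index_eq_one] at h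
    exact h ▸ le_top
  · rw [← index_ker] at h
    exact frattini_le_coatom (isCoatom_of_prime_index (h ▸ hA))

theorem card_monoidHom_le_card_of_isCyclic {Q A : Type*} [Group Q] [Finite Q] [CommGroup A]
    [Finite A] [IsCyclic A] : Nat.card (Q →* A) ≤ Nat.card Q := by
  have : NeZero (Nat.card A) := ⟨Nat.card_pos.ne'⟩
  let e : A ≃* rootsOfUnity (Nat.card A) ℂ :=
    mulEquivOfCyclicCardEq (Complex.card_rootsOfUnity _).symm
  let ι : A →* ℂˣ := (rootsOfUnity (Nat.card A) ℂ).subtype.comp e.toMonoidHom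
  have hι : Function.Injective ι := Subtype.val_injective.comp e.injective
  calc Nat.card (Q →* A) = Nat.card (Abelianization Q →* A) := Nat.card_congr Abelianization.lift
    _ ≤ Nat.card (Abelianization Q →* ℂˣ) :=
      Nat.card_le_card_of_injective (ι.comp ·) fun f g h => (MonoidHom.cancel_left hι).mp h
    _ = Nat.card (Abelianization Q) := CommGroup.card_monoidHom_of_hasEnoughRootsOfUnity _ ℂ
    _ ≤ Nat.card Q := Nat.card_le_card_of_surjective _ QuotientGroup.mk_surjective

theorem card_monoidHom_le_index_frattini {G A : Type*} [Group G] [Finite G] [CommGroup A]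
    (hA : (Nat.card A).Prime) : Nat.card (G →* A) ≤ (frattini G).index := by
  have : Fact (Nat.card A).Prime := ⟨hA⟩
  have : Finite A := Nat.finite_of_card_ne_zero hA.ne_zero
  have : IsCyclic A := isCyclic_of_prime_card rfl
  have : Finite (G ⧸ frattini G →* A) := FunLike.finite _
  calc Nat.card (G →* A) ≤ Nat.card (G ⧸ frattini G →* A) :=
        Nat.card_le_card_of_surjective (·.comp (QuotientGroup.mk' (frattini G))) fun f =>
          ⟨QuotientGroup.lift _ f (frattini_le_ker_of_prime_card hA f), rfl⟩
    _ ≤ (frattini G).index := card_monoidHom_le_card_of_isCyclic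

section CommutatorHom

open scoped IsMulCommutative commutatorElement

variable {H : Type*} [Group H]

theorem commutatorElement_mul_left_of_mem_center {a b x : H} (h : ⁅b, x⁆ ∈ center H) :
    ⁅a * b, x⁆ = ⁅a, x⁆ * ⁅b, x⁆ := by
  have hc := mem_center_iff.mp h
  calc ⁅a * b, x⁆ = a * ⁅b, x⁆ * x * a⁻¹ * x⁻¹ := by simp only [commutatorElement_def]; group
    _ = ⁅a, x⁆ * ⁅b, x⁆ := by rw [hc a, hc ⁅a, x⁆]; simp only [commutatorElement_def]; group

theorem commutatorElement_mul_right_of_mem_center {g a b : H} (h : ⁅g, b⁆ ∈ center H) :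
    ⁅g, a * b⁆ = ⁅g, a⁆ * ⁅g, b⁆ := by
  have hc := mem_center_iff.mp h
  calc ⁅g, a * b⁆ = g * a * g⁻¹ * (⁅g, b⁆ * a⁻¹) := by simp only [commutatorElement_def]; group
    _ = ⁅g, a⁆ * ⁅g, b⁆ := by rw [← hc a⁻¹]; simp only [commutatorElement_def]; group

variable {Z : Subgroup H} [Z.Normal]

variable (Z) in
def centralizerModulo (P : Subgroup H) : Subgroup H :=
  (centralizer (P.map (QuotientGroup.mk' Z) : Set (H ⧸ Z))).comap (QuotientGroup.mk' Z)

theorem mem_centralizerModulo_iff {P : Subgroup H} {h : H} :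
    h ∈ centralizerModulo Z P ↔ ∀ x ∈ P, ⁅h, x⁆ ∈ Z := by
  simp only [centralizerModulo, mem_comap, mem_centralizer_iff, coe_map, Set.forall_mem_image,
    SetLike.mem_coe]
  refine forall₂_congr fun x _ => ?_
  rw [← QuotientGroup.eq_one_iff, ← QuotientGroup.mk'_apply, map_commutatorElement,
    commutatorElement_eq_one_iff_mul_comm, eq_comm]

variable [IsMulCommutative Z]

def commutatorHom (hZ : Z ≤ center H) (P : Subgroup H) : centralizerModulo Z P →* (P →* Z) where
  toFun h :=
    { toFun x := ⟨⁅(h : H), x⁆, mem_centralizerModulo_iff.mp h.2 x x.2⟩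
      map_one' := by simp
      map_mul' x y := Subtype.ext <| commutatorElement_mul_right_of_mem_center <|
        hZ <| mem_centralizerModulo_iff.mp h.2 y y.2 }
  map_one' := by ext; simp
  map_mul' h h' := by
    ext x
    exact commutatorElement_mul_left_of_mem_center (hZ <| mem_centralizerModulo_iff.mp h'.2 x x.2)

theorem ker_commutatorHom (hZ : Z ≤ center H) (P : Subgroup H) :
    (commutatorHom hZ P).ker = (centralizer (P : Set H)).subgroupOf (centralizerModulo Z P) := by
  ext h
  simp [commutatorHom, mem_subgroupOf, mem_centralizer_iff, MonoidHom.ext_iff, Subtype.ext_iff,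
    commutatorElement_eq_one_iff_mul_comm, eq_comm]

/-- `C_H(P)` contains `Z`, so it is the full preimage of its image in `H ⧸ Z`. -/
theorem relIndex_map_centralizer_eq_card_range (hZ : Z ≤ center H) (P : Subgroup H) :
    ((centralizer (P : Set H)).map (QuotientGroup.mk' Z)).relIndex
        (centralizer (P.map (QuotientGroup.mk' Z) : Set (H ⧸ Z))) =
      Nat.card (commutatorHom hZ P).range := by
  rw [← map_comap_eq_self_of_surjective (QuotientGroup.mk'_surjective Z)
      (centralizer (P.map (QuotientGroup.mk' Z) : Set (H ⧸ Z))),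
    ← relIndex_comap, comap_map_eq, QuotientGroup.ker_mk',
    sup_of_le_left (hZ.trans (center_le_centralizer _)), relIndex, ← index_ker,
    ker_commutatorHom]
  rfl

end CommutatorHom

theorem stmt_19_general (p : ℕ) (hp : p.Prime) (H : Type*) [Group H]
    (Z : Subgroup H) [Z.Normal] (hZ : Z ≤ Subgroup.center H) (hZcard : Nat.card Z = p)
    (P : Subgroup H) [Finite P] :
    0 < Subgroup.relIndex
        ((Subgroup.centralizer (P : Set H)).map (QuotientGroup.mk' Z))
        (Subgroup.centralizer ((P.map (QuotientGroup.mk' Z)) : Set (H ⧸ Z))) ∧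
      Subgroup.relIndex
        ((Subgroup.centralizer (P : Set H)).map (QuotientGroup.mk' Z))
        (Subgroup.centralizer ((P.map (QuotientGroup.mk' Z)) : Set (H ⧸ Z)))
      ≤ (frattini ↥P).index := by
  have : Finite Z := Nat.finite_of_card_ne_zero (hZcard ▸ hp.ne_zero)
  have : Finite (P →* Z) := FunLike.finite _
  have : IsMulCommutative Z :=
    le_centralizer_iff_isMulCommutative.mp (hZ.trans (center_le_centralizer _))
  rw [relIndex_map_centralizer_eq_card_range hZ]
  open scoped IsMulCommutative in
  exact ⟨Nat.card_pos,
    (card_le_card_group _).trans (card_monoidHom_le_index_frattini (hZcard ▸ hp))⟩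

/-- Let `H` be a group, `Z ≤ Z(H)` of prime order `p`, and `P` a (finite) `p`-subgroup of `H`
containing `Z`.  Then the index of `C_H(P)/Z` in `C_{H/Z}(P/Z)` is finite and at most
`|P/Φ(P)|`, where `Φ(P)` is the Frattini subgroup of `P`. -/
theorem stmt_19 (p : ℕ) (hp : p.Prime) (H : Type*) [Group H]
    (Z : Subgroup H) [Z.Normal] (hZ : Z ≤ Subgroup.center H) (hZcard : Nat.card Z = p)
    (P : Subgroup H) [Finite P] (hP : IsPGroup p P) (hZP : Z ≤ P) :
    0 < Subgroup.relIndex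
        ((Subgroup.centralizer (P : Set H)).map (QuotientGroup.mk' Z))
        (Subgroup.centralizer ((P.map (QuotientGroup.mk' Z)) : Set (H ⧸ Z))) ∧
      Subgroup.relIndex
        ((Subgroup.centralizer (P : Set H)).map (QuotientGroup.mk' Z))
        (Subgroup.centralizer ((P.map (QuotientGroup.mk' Z)) : Set (H ⧸ Z)))
      ≤ (frattini ↥P).index :=
  stmt_19_general p hp H Z hZ hZcard P
end
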